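/- arXiv:1109.2645 — 3 statements merged into one kernel-verified Lean document; each statement's English description precedes it below -/
import Mathlib

section
/- Let S ⊆ ℝⁿ be a finite set and let Ξ be the additive subgroup of ℝⁿ generated by S, of rank r. Let γ : Ξ → ℤʳ be a group isomorphism. If μ ∈ Ξ is such that γ(μ) lies in the convex hull (in ℝʳ) of γ(S), then μ lies in the convex hull of S in ℝⁿ. -/
/-!
`γ⁻¹ : ℤʳ → Ξ ⊆ ℝⁿ` is additive, so it extends to an `ℝ`-linear map `L : ℝʳ → ℝⁿ` with
`L (γ a) = a` on `Ξ`. Linear maps send convex hulls onto convex hulls, so applying `L` to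
`γ μ ∈ conv (γ S)` gives `μ ∈ conv S`.
-/

open RealInnerProductSpace

/-- The natural embedding of `ℤʳ` into `ℝʳ`. -/
noncomputable def latticeEmbed {r : ℕ} (k : Fin r → ℤ) : EuclideanSpace ℝ (Fin r) :=
  WithLp.toLp 2 (fun i => (k i : ℝ))

namespace AddMonoidHom

variable {ι E : Type*} [Fintype ι] [DecidableEq ι] [AddCommGroup E] [Module ℝ E]

noncomputable def realExtension (f : (ι → ℤ) →+ E) : (ι → ℝ) →ₗ[ℝ] E :=
  (Pi.basisFun ℝ ι).constr ℝ fun i => f (Pi.single i 1)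

theorem realExtension_intCast (f : (ι → ℤ) →+ E) (k : ι → ℤ) :
    f.realExtension (fun i => (k i : ℝ)) = f k := by
  conv_rhs => rw [← Finset.univ_sum_single k, map_sum]
  rw [realExtension, Module.Basis.constr_apply_fintype]
  refine Finset.sum_congr rfl fun i _ => ?_
  rw [Pi.basisFun_equivFun, LinearEquiv.refl_apply, Int.cast_smul_eq_zsmul, ← map_zsmul,
    ← Pi.single_smul, smul_eq_mul, mul_one]

end AddMonoidHom

theorem exists_linearMap_latticeEmbed {r : ℕ} {E : Type*} [AddCommGroup E] [Module ℝ E]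
    (f : (Fin r → ℤ) →+ E) :
    ∃ L : EuclideanSpace ℝ (Fin r) →ₗ[ℝ] E, ∀ k, L (latticeEmbed k) = f k :=
  ⟨f.realExtension ∘ₗ (WithLp.linearEquiv 2 ℝ (Fin r → ℝ)).toLinearMap,
    f.realExtension_intCast⟩

theorem LinearMap.mem_convexHull_of_mem_convexHull_range {V E ι : Type*} [AddCommGroup V]
    [Module ℝ V] [AddCommGroup E] [Module ℝ E] (L : V →ₗ[ℝ] E) {g : ι → V} {s : Set E}
    (hg : ∀ i, L (g i) ∈ s) {x : V} (hx : x ∈ convexHull ℝ (Set.range g)) :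
    L x ∈ convexHull ℝ s := by
  have hLx : L x ∈ convexHull ℝ (L '' Set.range g) :=
    L.image_convexHull _ ▸ Set.mem_image_of_mem L hx
  refine convexHull_mono ?_ hLx
  rintro _ ⟨_, ⟨i, rfl⟩, rfl⟩
  exact hg i

/-- if `γ(μ)` lies in the convex hull of `γ(S)` in `ℝʳ`, then `μ` lies in the
convex hull of `S` in `ℝⁿ`. -/
theorem stmt_0 (n r : ℕ) (S : Finset (EuclideanSpace ℝ (Fin n)))
    (γ : AddSubgroup.closure (S : Set (EuclideanSpace ℝ (Fin n))) ≃+ (Fin r → ℤ))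
    (μ : AddSubgroup.closure (S : Set (EuclideanSpace ℝ (Fin n))))
    (h : latticeEmbed (γ μ) ∈ convexHull ℝ
      (Set.range (fun l : S =>
        latticeEmbed (γ ⟨l.1, AddSubgroup.subset_closure (Finset.mem_coe.mpr l.2)⟩)))) :
    (μ : EuclideanSpace ℝ (Fin n)) ∈ convexHull ℝ (S : Set (EuclideanSpace ℝ (Fin n))) := by
  obtain ⟨L, hL⟩ := exists_linearMap_latticeEmbed
    ((AddSubgroup.subtype _).comp γ.symm.toAddMonoidHom)
  have hLγ : ∀ a, L (latticeEmbed (γ a)) = a := fun a => by simp [hL]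
  rw [← hLγ μ]
  exact L.mem_convexHull_of_mem_convexHull_range (fun l => (hLγ _).symm ▸ l.2) h
end

section
/- Let S ⊆ ℝⁿ be a finite set generating a free abelian group Ξ of rank r, and let γ : Ξ → ℤʳ be a group isomorphism. If λ* ∈ S is a vertex (extreme point) of the convex hull of S in ℝⁿ, then γ(λ*) is a vertex of the convex hull of γ(S) in ℝʳ. -/
/-!
Suppose `γ(λ*)` lies in the convex hull of the other points `γ(λ)`. By Carathéodory it is a
positive combination of affinely independent integer points; the barycentric coordinates are then
unique and hence rational, and clearing denominators gives `N • γ(λ*) = ∑ cᵢ • γ(λᵢ)` with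
`cᵢ ∈ ℕ`, `∑ cᵢ = N > 0`. This identity only involves the group structure, so it pulls back along
the additive map `γ⁻¹ : ℤʳ → Ξ ⊆ ℝⁿ` and exhibits `λ*` as a convex combination of other points of
`S`.
-/

open RealInnerProductSpace

theorem mem_extremePoints_convexHull_iff {𝕜 E : Type*} [Field 𝕜] [LinearOrder 𝕜]
    [IsStrictOrderedRing 𝕜] [AddCommGroup E] [Module 𝕜 E] {A : Set E} {x : E} :
    x ∈ (convexHull 𝕜 A).extremePoints 𝕜 ↔ x ∈ A ∧ x ∉ convexHull 𝕜 (A \ {x}) := by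
  refine ⟨fun hx => ⟨extremePoints_convexHull_subset hx, fun hmem => ?_⟩, fun ⟨hxA, hx⟩ => ?_⟩
  · rw [(convex_convexHull 𝕜 A).mem_extremePoints_iff_mem_sdiff_convexHull_sdiff] at hx
    exact hx.2 (convexHull_mono (Set.sdiff_subset_sdiff_left (subset_convexHull 𝕜 A)) hmem)
  rcases (A \ {x}).eq_empty_or_nonempty with hA | hA
  · obtain rfl : A = {x} :=
      (Set.sdiff_eq_empty.1 hA).antisymm (Set.singleton_subset_iff.2 hxA)
    simp
  rw [mem_extremePoints_iff_left, ← Set.insert_sdiff_self_of_mem hxA, convexHull_insert hA,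
    convexJoin_singleton_left]
  obtain ⟨p, hp⟩ := hA.mono (subset_convexHull 𝕜 _)
  refine ⟨Set.mem_biUnion hp (left_mem_segment 𝕜 x p), ?_⟩
  simp only [Set.mem_iUnion₂, segment_eq_image', openSegment_eq_image']
  rintro _ ⟨p, hp, s, ⟨hs0, -⟩, rfl⟩ _ ⟨q, hq, t, ⟨ht0, -⟩, rfl⟩ ⟨θ, ⟨hθ0, hθ1⟩, hxθ⟩
  suffices s = 0 by simp [this]
  by_contra hs
  -- otherwise `x` is a positive combination of `p` and `q`, hence in `convexHull 𝕜 (A \ {x})`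
  have ha : 0 < (1 - θ) * s := mul_pos (by linarith) (lt_of_le_of_ne hs0 (Ne.symm hs))
  have hb : 0 ≤ θ * t := mul_nonneg hθ0.le ht0
  have hc : 0 < (1 - θ) * s + θ * t := by positivity
  have hcomb : ((1 - θ) * s + θ * t) • x = ((1 - θ) * s) • p + (θ * t) • q := by
    linear_combination (norm := module) -hxθ
  refine hx ?_
  convert convex_convexHull 𝕜 _ hp hq (div_nonneg ha.le hc.le) (div_nonneg hb hc.le)
    (by field_simp) using 1
  rw [div_eq_inv_mul, div_eq_inv_mul, mul_smul _ ((1 - θ) * s), mul_smul _ (θ * t), ← smul_add,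
    eq_inv_smul_iff₀ hc.ne', hcomb]

theorem Finset.mem_convexHull_of_sum_nsmul_eq {𝕜 E ι : Type*} [Field 𝕜] [LinearOrder 𝕜]
    [IsStrictOrderedRing 𝕜] [AddCommGroup E] [Module 𝕜 E] {A : Set E} (s : Finset ι)
    (c : ι → ℕ) (z : ι → E) (x : E) (hz : ∀ i ∈ s, z i ∈ A) (hc : ∑ i ∈ s, c i ≠ 0)
    (h : ∑ i ∈ s, c i • z i = (∑ i ∈ s, c i) • x) : x ∈ convexHull 𝕜 A := by
  have hc' : (0 : 𝕜) < ∑ i ∈ s, (c i : 𝕜) := by exact_mod_cast Nat.pos_of_ne_zero hc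
  convert s.centerMass_mem_convexHull (fun i _ => Nat.cast_nonneg (c i)) hc' hz using 1
  rw [Finset.centerMass, eq_inv_smul_iff₀ hc'.ne']
  simp only [Nat.cast_smul_eq_nsmul, ← Nat.cast_sum]
  exact h.symm

theorem exists_rat_retraction : ∃ π : ℝ →ₗ[ℚ] ℚ, ∀ q : ℚ, π q = q := by
  obtain ⟨π, hπ⟩ := LinearMap.exists_leftInverse_of_injective (Algebra.linearMap ℚ ℝ)
    (LinearMap.ker_eq_bot.2 (algebraMap ℚ ℝ).injective)
  exact ⟨π, LinearMap.congr_fun hπ⟩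

theorem sum_mul_intCast_of_retraction {ι : Type*} (s : Finset ι) {π : ℝ →ₗ[ℚ] ℚ}
    (hπ : ∀ q : ℚ, π q = q) {w : ι → ℝ} {m : ι → ℤ} {m₀ : ℤ}
    (h : ∑ i ∈ s, w i * m i = m₀) : ∑ i ∈ s, (π (w i) : ℝ) * m i = m₀ := by
  have hterm (i : ι) : π (w i * m i) = π (w i) * m i := by
    rw [mul_comm, ← zsmul_eq_mul, map_zsmul, zsmul_eq_mul, mul_comm]
  have h' := congrArg π h
  rw [map_sum, ← Rat.cast_intCast m₀, hπ] at h'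
  simp only [hterm] at h'
  exact_mod_cast h'

theorem sum_smul_latticeEmbed_apply {r : ℕ} {ι : Type*} (s : Finset ι) (w : ι → ℝ)
    (v : ι → Fin r → ℤ) (j : Fin r) :
    (∑ i ∈ s, w i • latticeEmbed (v i)) j = ∑ i ∈ s, w i * v i j := by
  simp [latticeEmbed]

theorem latticeEmbed_apply {r : ℕ} (k : Fin r → ℤ) (j : Fin r) : latticeEmbed k j = k j := rfl

theorem exists_rat_weights_of_affineIndependent {r : ℕ} {ι : Type*} [Fintype ι]
    {v : ι → Fin r → ℤ} {k : Fin r → ℤ} {w : ι → ℝ} (hv : AffineIndependent ℝ (latticeEmbed ∘ v))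
    (hw : ∑ i, w i = 1) (hk : ∑ i, w i • latticeEmbed (v i) = latticeEmbed k) :
    ∃ q : ι → ℚ, w = fun i => (q i : ℝ) := by
  -- `π ∘ w` solves the same rational linear system, so it equals `w` by uniqueness of
  -- barycentric coordinates
  obtain ⟨π, hπ⟩ := exists_rat_retraction
  refine ⟨fun i => π (w i), ?_⟩
  have hw' : ∑ i, (π (w i) : ℝ) = 1 := by
    simpa using
      sum_mul_intCast_of_retraction Finset.univ hπ (m := 1) (m₀ := 1) (by simpa using hw)
  have hk' : ∑ i, (π (w i) : ℝ) • latticeEmbed (v i) = latticeEmbed k := by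
    ext j
    rw [sum_smul_latticeEmbed_apply, latticeEmbed_apply]
    refine sum_mul_intCast_of_retraction Finset.univ hπ ?_
    rw [← sum_smul_latticeEmbed_apply, hk, latticeEmbed_apply]
  refine (affineIndependent_iff_eq_of_fintype_affineCombination_eq ℝ _).1 hv _ _ hw hw' ?_
  rw [Finset.univ.affineCombination_eq_linear_combination _ _ hw,
    Finset.univ.affineCombination_eq_linear_combination _ _ hw']
  exact hk.trans hk'.symm

theorem exists_nat_mul_eq_natCast {ι : Type*} [Fintype ι] (q : ι → ℚ) (hq : ∀ i, 0 ≤ q i) :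
    ∃ N : ℕ, 0 < N ∧ ∀ i, ∃ m : ℕ, N * q i = m := by
  refine ⟨∏ i, (q i).den, Finset.prod_pos fun i _ => (q i).pos, fun i => ?_⟩
  obtain ⟨d, hd⟩ := Finset.dvd_prod_of_mem (fun i => (q i).den) (Finset.mem_univ i)
  refine ⟨(q i).num.toNat * d, ?_⟩
  rw [hd, Nat.cast_mul, Nat.cast_mul, ← Int.cast_natCast (q i).num.toNat,
    Int.toNat_of_nonneg (Rat.num_nonneg.2 (hq i)), ← Rat.mul_den_eq_num]
  ring

theorem AddMonoidHom.mem_convexHull_image_of_latticeEmbed_mem {r : ℕ} {E : Type*}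
    [AddCommGroup E] [Module ℝ E] (f : (Fin r → ℤ) →+ E) {Z : Set (Fin r → ℤ)}
    {k : Fin r → ℤ} (hk : latticeEmbed k ∈ convexHull ℝ (latticeEmbed '' Z)) :
    f k ∈ convexHull ℝ (f '' Z) := by
  obtain ⟨ι, _, z, w, hzZ, hz, hw0, hw1, hwk⟩ := eq_pos_convex_span_of_mem_convexHull hk
  choose v hvZ hvz using fun i => hzZ (Set.mem_range_self i)
  obtain rfl : z = latticeEmbed ∘ v := funext fun i => (hvz i).symm
  obtain ⟨q, rfl⟩ := exists_rat_weights_of_affineIndependent hz hw1 hwk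
  simp only [Function.comp_apply] at hw0 hw1 hwk
  obtain ⟨N, hN, hNq⟩ := exists_nat_mul_eq_natCast q fun i => Rat.cast_nonneg.1 (hw0 i).le
  choose c hc using hNq
  have hcw : ∀ i, (c i : ℝ) = N * q i := fun i => by exact_mod_cast (hc i).symm
  have hsum : ∑ i, c i = N := by
    have hsumℝ : ∑ i, (c i : ℝ) = N := by
      simp_rw [hcw, ← Finset.mul_sum, hw1, mul_one]
    exact_mod_cast hsumℝ
  have hcomb : ∑ i, c i • v i = N • k := by
    ext j
    have hj : ∑ i, (q i : ℝ) * v i j = k j := by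
      rw [← sum_smul_latticeEmbed_apply, hwk, latticeEmbed_apply]
    have hcj : ∑ i, (c i : ℝ) * v i j = N * k j := by
      simp_rw [hcw, mul_assoc, ← Finset.mul_sum, hj]
    simp only [Finset.sum_apply, Pi.smul_apply, nsmul_eq_mul]
    exact_mod_cast hcj
  refine Finset.univ.mem_convexHull_of_sum_nsmul_eq c (f ∘ v) (f k)
    (fun i _ => ⟨v i, hvZ i, rfl⟩) (by omega) ?_
  simp only [Function.comp, ← map_nsmul, ← map_sum, hcomb, hsum]

/-- if `λ* ∈ S` is a vertex (extreme point) of `conv S`, then `γ(λ*)` is a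
vertex of `conv (γ S)`. -/
theorem stmt_1 (n r : ℕ) (S : Finset (EuclideanSpace ℝ (Fin n)))
    (γ : AddSubgroup.closure (S : Set (EuclideanSpace ℝ (Fin n))) ≃+ (Fin r → ℤ))
    (lstar : EuclideanSpace ℝ (Fin n)) (hmem : lstar ∈ S)
    (hvert : lstar ∈ Set.extremePoints ℝ (convexHull ℝ (S : Set (EuclideanSpace ℝ (Fin n))))) :
    latticeEmbed (γ ⟨lstar, AddSubgroup.subset_closure (Finset.mem_coe.mpr hmem)⟩) ∈
      Set.extremePoints ℝ (convexHull ℝ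
        (Set.range (fun l : S =>
          latticeEmbed (γ ⟨l.1, AddSubgroup.subset_closure (Finset.mem_coe.mpr l.2)⟩)))) := by
  let f : (Fin r → ℤ) →+ EuclideanSpace ℝ (Fin n) :=
    (AddSubgroup.closure (S : Set (EuclideanSpace ℝ (Fin n)))).subtype.comp γ.symm.toAddMonoidHom
  let Z : Set (Fin r → ℤ) := γ '' (Subtype.val ⁻¹' (↑S \ {lstar}))
  rw [mem_extremePoints_convexHull_iff] at hvert ⊢
  refine ⟨⟨⟨lstar, hmem⟩, rfl⟩, fun hk => hvert.2 ?_⟩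
  have hfk : f (γ ⟨lstar, AddSubgroup.subset_closure hmem⟩) = lstar := by simp [f]
  rw [← hfk]
  refine convexHull_mono ?_ (f.mem_convexHull_image_of_latticeEmbed_mem (Z := Z)
    (convexHull_mono ?_ hk))
  · rintro _ ⟨_, ⟨l, hl, rfl⟩, rfl⟩
    simpa [f] using hl
  · rintro _ ⟨⟨⟨l, hl⟩, rfl⟩, hne⟩
    refine ⟨_, ⟨_, ⟨hl, fun h => hne ?_⟩, rfl⟩, rfl⟩
    subst h
    rfl
end

section
/- With the notation of the associated Laurent polynomial: let f be an exponential sum on ℂⁿ with spectrum S generating a free group Ξ of rank r with basis ω₁,…,ω_r, P the associated Laurent polynomial, L(x) = (⟨x,ω₁⟩,…,⟨x,ω_r⟩), and define F_f = { x ∈ ℝⁿ : ∃ χ ∈ Hom(Ξ, S¹), f_χ(x) = 0 }. Then L(F_f) = L(ℝⁿ) ∩ A_P and L(ℝⁿ \ F_f) = L(ℝⁿ) \ A_P, where A_P = Log(V(P)) is the amoeba of P and Log(ζ) = (ln|ζ₁|,…,ln|ζ_r|). -/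
/-!
Writing `l = ∑ g_l j • ω_j`, the term `a_l χ(l) e^{⟨x,l⟩}` of `f_χ(x)` is the monomial
`a_l ζ^{g_l}` at `ζ_j = χ(ω_j) e^{⟨x,ω_j⟩}`, so `f_χ(x) = P(ζ)` and `Log ζ = L x`. Conversely,
every `ζ ∈ (ℂ*)ʳ` with `Log ζ = L x` is of this form: since `Ξ` is free on the `ω_j`, the
arguments of the `ζ_j` can be prescribed as the values `χ(ω_j)` of a character of `Ξ`. Hence
`F_f = L⁻¹(A_P)`, and both identities are images of preimages under `L`.
-/

open Complex Set Submodule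

lemma AddChar.map_sum_eq_prod {A M ι : Type*} [AddCommMonoid A] [CommMonoid M]
    (ψ : AddChar A M) (s : Finset ι) (f : ι → A) :
    ψ (∑ i ∈ s, f i) = ∏ i ∈ s, ψ (f i) := by
  classical
  induction s using Finset.induction with
  | empty => simp
  | insert _ _ h ih => rw [Finset.sum_insert h, Finset.prod_insert h, AddChar.map_add_eq_mul, ih]

lemma AddChar.exists_apply_eq_of_le_span {E M ι : Type*} [AddCommGroup E] [CommGroup M]
    {Ξ : AddSubgroup E} {ω : ι → E} (hind : LinearIndependent ℤ ω)
    (hΞ : Ξ ≤ (span ℤ (range ω)).toAddSubgroup) (hω : ∀ j, ω j ∈ Ξ) (u : ι → M) :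
    ∃ χ : AddChar Ξ M, ∀ j, χ ⟨ω j, hω j⟩ = u j := by
  let φ : span ℤ (range ω) →+ Additive M :=
    ((Module.Basis.span hind).constr ℤ (fun j => Additive.ofMul (u j))).toAddMonoidHom
  refine ⟨AddChar.toAddMonoidHomEquiv.symm (φ.comp (AddSubgroup.inclusion hΞ)), fun j => ?_⟩
  have hbasis : AddSubgroup.inclusion hΞ ⟨ω j, hω j⟩ = Module.Basis.span hind j := by
    rw [Module.Basis.span_apply]; rfl
  change Additive.toMul (φ (AddSubgroup.inclusion hΞ ⟨ω j, hω j⟩)) = u j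
  rw [hbasis]
  simp [φ, -Module.Basis.span_apply]

lemma AddChar.apply_eq_prod_zpow {E M ι : Type*} [AddCommGroup E] [CommGroup M] [Fintype ι]
    {Ξ : AddSubgroup E} (χ : AddChar Ξ M) {ω : ι → E} (hω : ∀ j, ω j ∈ Ξ) (c : ι → ℤ)
    {v : E} (hv : v ∈ Ξ) (hvc : v = ∑ j, c j • ω j) :
    χ ⟨v, hv⟩ = ∏ j, χ ⟨ω j, hω j⟩ ^ c j := by
  have : (⟨v, hv⟩ : Ξ) = ∑ j, c j • ⟨ω j, hω j⟩ := by
    ext; simp [hvc]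
  rw [this, AddChar.map_sum_eq_prod]
  exact Finset.prod_congr rfl fun j _ => AddChar.map_zsmul_eq_zpow χ _ _

lemma AddChar.coe_mul_exp_inner_eq_prod {E ι : Type*} [NormedAddCommGroup E]
    [InnerProductSpace ℝ E] [Fintype ι] {Ξ : AddSubgroup E} (χ : AddChar Ξ Circle)
    {ω : ι → E} (hω : ∀ j, ω j ∈ Ξ) (c : ι → ℤ) (x : E) {v : E} (hv : v ∈ Ξ)
    (hvc : v = ∑ j, c j • ω j) :
    (χ ⟨v, hv⟩ : ℂ) * exp (inner ℝ x v : ℝ) =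
      ∏ j, ((χ ⟨ω j, hω j⟩ : ℂ) * exp (inner ℝ x (ω j) : ℝ)) ^ c j := by
  have hexp : exp (inner ℝ x v : ℝ) = ∏ j, exp (inner ℝ x (ω j) : ℝ) ^ c j := by
    simp_rw [← exp_int_mul, ← exp_sum, hvc, inner_sum, ← Int.cast_smul_eq_zsmul ℝ,
      real_inner_smul_right]
    push_cast; rfl
  have hχ : (χ ⟨v, hv⟩ : ℂ) = ∏ j, (χ ⟨ω j, hω j⟩ : ℂ) ^ c j := by
    rw [χ.apply_eq_prod_zpow hω c hv hvc]
    exact (map_prod Circle.coeHom _ _).trans (Finset.prod_congr rfl fun j _ => Circle.coe_zpow _ _)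
  simp_rw [hχ, hexp, mul_zpow, Finset.prod_mul_distrib]

lemma Complex.circleExp_arg_mul_exp_log_norm {z : ℂ} (hz : z ≠ 0) :
    (Circle.exp (arg z) : ℂ) * exp (Real.log ‖z‖ : ℝ) = z := by
  rw [← ofReal_exp, Real.exp_log (norm_pos_iff.mpr hz), Circle.coe_exp, mul_comm,
    norm_mul_exp_arg_mul_I]

theorem stmt_12_general (n r : ℕ) (S : Finset (EuclideanSpace ℝ (Fin n)))
    (a : EuclideanSpace ℝ (Fin n) → ℂ)
    (ω : Fin r → EuclideanSpace ℝ (Fin n)) (hind : LinearIndependent ℤ ω)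
    (hωmem : ∀ j, ω j ∈ AddSubgroup.closure (S : Set (EuclideanSpace ℝ (Fin n))))
    (g : EuclideanSpace ℝ (Fin n) → Fin r → ℤ)
    (hg : ∀ l ∈ S, l = ∑ j, g l j • ω j)
    (P : (Fin r → ℂ) → ℂ)
    (hP : ∀ ζ, P ζ = ∑ l ∈ S, a l * ∏ j, ζ j ^ (g l j))
    (L : EuclideanSpace ℝ (Fin n) →ₗ[ℝ] EuclideanSpace ℝ (Fin r))
    (hL : ∀ (x : EuclideanSpace ℝ (Fin n)) (i : Fin r), L x i = (inner ℝ x (ω i) : ℝ))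
    (Ff : Set (EuclideanSpace ℝ (Fin n)))
    (hFf : Ff = {x | ∃ χ : AddChar (AddSubgroup.closure (S : Set (EuclideanSpace ℝ (Fin n)))) Circle,
      ∑ l ∈ S.attach,
        a l.1 * (χ ⟨l.1, AddSubgroup.subset_closure (Finset.mem_coe.mpr l.2)⟩ : ℂ) *
          Complex.exp ((inner ℝ x l.1 : ℝ) : ℂ) = 0})
    (AP : Set (EuclideanSpace ℝ (Fin r)))
    (hAP : AP = {y | ∃ ζ : Fin r → ℂ, (∀ j, ζ j ≠ 0) ∧ P ζ = 0 ∧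
      ∀ j, y j = Real.log (‖ζ j‖)}) :
    L '' Ff = Set.range L ∩ AP ∧ L '' Ffᶜ = Set.range L \ AP := by
  set Ξ := AddSubgroup.closure (S : Set (EuclideanSpace ℝ (Fin n)))
  have hΞ : Ξ ≤ (span ℤ (range ω)).toAddSubgroup :=
    (AddSubgroup.closure_le _).mpr fun l hl => (hg l hl) ▸
      sum_mem fun j _ => smul_mem _ _ (subset_span ⟨j, rfl⟩)
  have hfP : ∀ (χ : AddChar Ξ Circle) (x : EuclideanSpace ℝ (Fin n)),
      ∑ l ∈ S.attach, a l.1 * (χ ⟨l.1, AddSubgroup.subset_closure (Finset.mem_coe.mpr l.2)⟩ : ℂ) *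
        exp (inner ℝ x l.1 : ℝ) = P (fun j => (χ ⟨ω j, hωmem j⟩ : ℂ) * exp (L x j : ℝ)) := by
    intro χ x
    rw [hP, ← Finset.sum_attach S]
    refine Finset.sum_congr rfl fun l _ => ?_
    rw [mul_assoc, χ.coe_mul_exp_inner_eq_prod hωmem (g l) x _ (hg l l.2)]
    simp_rw [hL]
  have hFf_eq : Ff = L ⁻¹' AP := by
    ext x
    simp only [hFf, hAP, hfP, mem_ofPred_eq, mem_preimage]
    constructor
    · rintro ⟨χ, hχ⟩
      exact ⟨_, fun j => mul_ne_zero (Circle.coe_ne_zero _) (exp_ne_zero _), hχ,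
        fun j => by simp [Complex.norm_exp, Circle.norm_coe]⟩
    · rintro ⟨ζ, hζ0, hPζ, hlog⟩
      obtain ⟨χ, hχ⟩ := AddChar.exists_apply_eq_of_le_span hind hΞ hωmem
        fun j => Circle.exp (arg (ζ j))
      refine ⟨χ, ?_⟩
      convert hPζ with j
      rw [hχ, hlog, circleExp_arg_mul_exp_log_norm (hζ0 j)]
  rw [hFf_eq, ← preimage_compl, image_preimage_eq_range_inter, image_preimage_eq_range_inter,
    Set.sdiff_eq]
  exact ⟨rfl, rfl⟩

/-- `L(F_f) = L(ℝⁿ) ∩ A_P` and `L(ℝⁿ \ F_f) = L(ℝⁿ) \ A_P`, where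
`F_f = {x : ∃ χ, f_χ(x) = 0}` and `A_P = Log V(P)` is the amoeba of the associated Laurent
polynomial `P`. -/
theorem stmt_12 (n r : ℕ) (S : Finset (EuclideanSpace ℝ (Fin n)))
    (a : EuclideanSpace ℝ (Fin n) → ℂ) (ha : ∀ l ∈ S, a l ≠ 0)
    (ω : Fin r → EuclideanSpace ℝ (Fin n)) (hind : LinearIndependent ℤ ω)
    (hωmem : ∀ j, ω j ∈ AddSubgroup.closure (S : Set (EuclideanSpace ℝ (Fin n))))
    (g : EuclideanSpace ℝ (Fin n) → Fin r → ℤ)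
    (hg : ∀ l ∈ S, l = ∑ j, g l j • ω j)
    (P : (Fin r → ℂ) → ℂ)
    (hP : ∀ ζ, P ζ = ∑ l ∈ S, a l * ∏ j, ζ j ^ (g l j))
    (L : EuclideanSpace ℝ (Fin n) →ₗ[ℝ] EuclideanSpace ℝ (Fin r))
    (hL : ∀ (x : EuclideanSpace ℝ (Fin n)) (i : Fin r), L x i = (inner ℝ x (ω i) : ℝ))
    (Ff : Set (EuclideanSpace ℝ (Fin n)))
    (hFf : Ff = {x | ∃ χ : AddChar (AddSubgroup.closure (S : Set (EuclideanSpace ℝ (Fin n)))) Circle,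
      ∑ l ∈ S.attach,
        a l.1 * (χ ⟨l.1, AddSubgroup.subset_closure (Finset.mem_coe.mpr l.2)⟩ : ℂ) *
          Complex.exp ((inner ℝ x l.1 : ℝ) : ℂ) = 0})
    (AP : Set (EuclideanSpace ℝ (Fin r)))
    (hAP : AP = {y | ∃ ζ : Fin r → ℂ, (∀ j, ζ j ≠ 0) ∧ P ζ = 0 ∧
      ∀ j, y j = Real.log (‖ζ j‖)}) :
    L '' Ff = Set.range L ∩ AP ∧ L '' Ffᶜ = Set.range L \ AP :=
  stmt_12_general n r S a ω hind hωmem g hg P hP L hL Ff hFf AP hAP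
end
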